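/- Let F_n, F be distribution functions of real random variables with F_n(x) → F(x) at every point x of continuity of F. If F is continuous everywhere, then the convergence is uniform: sup_{x ∈ ℝ} |F_n(x) − F(x)| → 0 as n → ∞ (Pólya's theorem). -/
import Mathlib


open MeasureTheory Filter Topology

/-- Pólya's theorem: if distribution functions `F n` converge to a distribution
function `F` at all continuity points of `F`, and `F` is continuous everywhere,
then the convergence is uniform on `ℝ`. -/
theorem polya_uniform_convergence
    (Fn : ℕ → ℝ → ℝ) (F : ℝ → ℝ)
    (hFnmono : ∀ n, Monotone (Fn n))
    (hFnrc : ∀ n, ∀ x : ℝ, ContinuousWithinAt (Fn n) (Set.Ici x) x)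
    (hFnbot : ∀ n, Tendsto (Fn n) atBot (𝓝 0)) (hFntop : ∀ n, Tendsto (Fn n) atTop (𝓝 1))
    (hFmono : Monotone F)
    (hFbot : Tendsto F atBot (𝓝 0)) (hFtop : Tendsto F atTop (𝓝 1))
    (hFcont : Continuous F)
    (hconv : ∀ x : ℝ, ContinuousAt F x → Tendsto (fun n => Fn n x) atTop (𝓝 (F x))) :
    Tendsto (fun n => ⨆ x : ℝ, |Fn n x - F x|) atTop (𝓝 0) := by
  have hF0 : ∀ x, 0 ≤ F x := fun x =>
    le_of_tendsto hFbot (eventually_atBot.2 ⟨x, fun y hy => hFmono hy⟩)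
  have hF1 : ∀ x, F x ≤ 1 := fun x =>
    ge_of_tendsto hFtop (eventually_atTop.2 ⟨x, fun y hy => hFmono hy⟩)
  have hFn0 : ∀ n x, 0 ≤ Fn n x := fun n x =>
    le_of_tendsto (hFnbot n) (eventually_atBot.2 ⟨x, fun y hy => hFnmono n hy⟩)
  have hFn1 : ∀ n x, Fn n x ≤ 1 := fun n x =>
    ge_of_tendsto (hFntop n) (eventually_atTop.2 ⟨x, fun y hy => hFnmono n hy⟩)
  have hsurj : ∀ t : ℝ, 0 < t → t < 1 → ∃ y, F y = t := by
    intro t ht0 ht1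
    obtain ⟨a, ha⟩ := (hFbot.eventually (gt_mem_nhds ht0)).exists
    obtain ⟨b, hb⟩ := (hFtop.eventually (lt_mem_nhds ht1)).exists
    have hab : a ≤ b := by
      by_contra h
      push_neg at h
      exact absurd (hFmono h.le) (by linarith)
    obtain ⟨y, _, hy⟩ := intermediate_value_Icc hab hFcont.continuousOn ⟨ha.le, hb.le⟩
    exact ⟨y, hy⟩
  rw [Metric.tendsto_atTop]
  intro ε hε
  obtain ⟨m, hmgt⟩ := exists_nat_gt (max 2 (4 / ε))
  have hm2 : (2 : ℝ) ≤ m := ((le_max_left _ _).trans_lt hmgt).le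
  have hmpos : (0 : ℝ) < m := by linarith
  have hminv : 1 / (m : ℝ) < ε / 4 := by
    have h4 : 4 / ε < m := (le_max_right _ _).trans_lt hmgt
    rw [div_lt_iff₀ hε] at h4
    rw [div_lt_div_iff₀ hmpos (by norm_num)]
    nlinarith
  -- choose the grid points
  have hy' : ∀ k : ℕ, ∃ z, (1 ≤ k → (k : ℝ) ≤ m - 1 → F z = k / m) := by
    intro k
    by_cases h : 1 ≤ k ∧ (k : ℝ) ≤ m - 1
    · obtain ⟨z, hz⟩ := hsurj ((k : ℝ) / m)
        (by
          have : (1 : ℝ) ≤ k := by exact_mod_cast h.1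
          positivity)
        (by
          rw [div_lt_one hmpos]
          linarith [h.2])
      exact ⟨z, fun _ _ => hz⟩
    · exact ⟨0, fun h1 h2 => absurd ⟨h1, h2⟩ h⟩
  choose y hy using hy'
  have hev : ∀ᶠ n in atTop, ∀ k ∈ Finset.range (m + 1), |Fn n (y k) - F (y k)| < ε / 4 := by
    rw [eventually_all_finset]
    intro k _
    have h1 := hconv (y k) hFcont.continuousAt
    have h2 : ∀ᶠ z in 𝓝 (F (y k)), |z - F (y k)| < ε / 4 := by
      have : Metric.ball (F (y k)) (ε / 4) ∈ 𝓝 (F (y k)) :=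
        Metric.ball_mem_nhds _ (by linarith)
      filter_upwards [this] with z hz
      simpa [Real.dist_eq] using hz
    exact h1.eventually h2
  obtain ⟨N, hN⟩ := eventually_atTop.1 hev
  refine ⟨N, fun n hn => ?_⟩
  have key : ∀ x, |Fn n x - F x| ≤ ε / 2 := by
    intro x
    have ht0 := hF0 x
    have ht1 := hF1 x
    rw [abs_sub_le_iff]
    constructor
    · -- Fn n x ≤ F x + ε/2
      by_cases hcase : 1 - 1 / (m : ℝ) ≤ F x
      · have := hFn1 n x
        linarith
      · push_neg at hcase
        set k : ℕ := Nat.floor ((m : ℝ) * F x) + 1 with hkdef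
        have hfl0 : (Nat.floor ((m : ℝ) * F x) : ℝ) ≤ m * F x :=
          Nat.floor_le (by positivity)
        have hflt : (m : ℝ) * F x < Nat.floor ((m : ℝ) * F x) + 1 :=
          Nat.lt_floor_add_one _
        have hkcast : (k : ℝ) = Nat.floor ((m : ℝ) * F x) + 1 := by
          push_cast [hkdef]; ring
        have hk1 : 1 ≤ k := Nat.le_add_left 1 _
        have hkm : (k : ℝ) ≤ m - 1 := by
          have h1 : (m : ℝ) * F x < m - 1 := by
            have h := mul_lt_mul_of_pos_left hcase hmpos
            have hmm : (m : ℝ) * (1 - 1 / m) = m - 1 := by field_simp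
            linarith [h, hmm]
          have h2 : (Nat.floor ((m : ℝ) * F x) : ℝ) < m - 1 := lt_of_le_of_lt hfl0 h1
          have h3 : Nat.floor ((m : ℝ) * F x) < m - 1 := by
            have hm2' : 2 ≤ m := by exact_mod_cast hm2
            have : (Nat.floor ((m : ℝ) * F x) : ℝ) < ((m - 1 : ℕ) : ℝ) := by
              rw [Nat.cast_sub (by omega)]; push_cast; linarith
            exact_mod_cast this
          rw [hkcast]
          have : k ≤ m - 1 := by omega
          have hm2' : 2 ≤ m := by exact_mod_cast hm2
          calc ((Nat.floor ((m : ℝ) * F x) : ℝ) + 1) = (k : ℝ) := hkcast.symm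
            _ ≤ ((m - 1 : ℕ) : ℝ) := by exact_mod_cast this
            _ = (m : ℝ) - 1 := by rw [Nat.cast_sub (by omega)]; push_cast; ring
        have hFyk : F (y k) = (k : ℝ) / m := hy k hk1 hkm
        have hxyk : x ≤ y k := by
          by_contra h
          push_neg at h
          have h2 : F (y k) ≤ F x := hFmono h.le
          rw [hFyk] at h2
          have : (k : ℝ) ≤ m * F x := by
            rw [div_le_iff₀ hmpos] at h2; linarith [h2]
          rw [hkcast] at this
          linarith
        have hmem : k ∈ Finset.range (m + 1) := by
          refine Finset.mem_range.2 ?_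
          have : (k : ℝ) ≤ m - 1 := hkm
          have : (k : ℝ) < m := by linarith
          have : k < m := by exact_mod_cast this
          omega
        have hnear := hN n hn k hmem
        have h5 : Fn n x ≤ Fn n (y k) := hFnmono n hxyk
        have h6 : Fn n (y k) - F (y k) < ε / 4 := (abs_lt.1 hnear).2
        have h7 : (k : ℝ) / m ≤ F x + 1 / m := by
          rw [div_le_iff₀ hmpos, hkcast]
          have : F x * m + 1 / m * m = m * F x + 1 := by field_simp
          nlinarith
        rw [hFyk] at h6
        linarith
    · -- F x ≤ Fn n x + ε/2
      by_cases hcase : F x ≤ 1 / (m : ℝ)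
      · have := hFn0 n x
        linarith
      · push_neg at hcase
        have hmt1 : (1 : ℝ) < m * F x := by
          rw [div_lt_iff₀ hmpos] at hcase
          linarith [hcase]
        have hc1 : (m : ℝ) * F x ≤ Nat.ceil ((m : ℝ) * F x) := Nat.le_ceil _
        have hc2 : (Nat.ceil ((m : ℝ) * F x) : ℝ) < m * F x + 1 :=
          Nat.ceil_lt_add_one (by positivity)
        have hceil2 : 2 ≤ Nat.ceil ((m : ℝ) * F x) := by
          have : (1 : ℕ) < Nat.ceil ((m : ℝ) * F x) := Nat.lt_ceil.2 (by push_cast; linarith)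
          omega
        set k : ℕ := Nat.ceil ((m : ℝ) * F x) - 1 with hkdef
        have hkcast : (k : ℝ) = (Nat.ceil ((m : ℝ) * F x) : ℝ) - 1 := by
          rw [hkdef, Nat.cast_sub (by omega)]; push_cast; ring
        have hk1 : 1 ≤ k := by omega
        have hkm : (k : ℝ) ≤ m - 1 := by
          have hle : Nat.ceil ((m : ℝ) * F x) ≤ m := Nat.ceil_le.2 (by nlinarith)
          rw [hkcast]
          have : (Nat.ceil ((m : ℝ) * F x) : ℝ) ≤ m := by exact_mod_cast hle
          linarith
        have hFyk : F (y k) = (k : ℝ) / m := hy k hk1 hkm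
        have hklt : (k : ℝ) < m * F x := by rw [hkcast]; linarith
        have hxyk : y k ≤ x := by
          by_contra h
          push_neg at h
          have h2 : F x ≤ F (y k) := hFmono h.le
          rw [hFyk] at h2
          rw [le_div_iff₀ hmpos] at h2
          nlinarith
        have hmem : k ∈ Finset.range (m + 1) := by
          refine Finset.mem_range.2 ?_
          have : (k : ℝ) < m := by linarith [hkm]
          have : k < m := by exact_mod_cast this
          omega
        have hnear := hN n hn k hmem
        have h5 : Fn n (y k) ≤ Fn n x := hFnmono n hxyk
        have h6 : F (y k) - Fn n (y k) < ε / 4 := by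
          have := (abs_lt.1 hnear).1
          linarith
        have h7 : F x - 1 / m ≤ (k : ℝ) / m := by
          rw [le_div_iff₀ hmpos, hkcast]
          have : (F x - 1 / m) * m = m * F x - 1 := by field_simp
          nlinarith
        rw [hFyk] at h6
        linarith
  have hba : BddAbove (Set.range fun x => |Fn n x - F x|) :=
    ⟨ε / 2, by rintro _ ⟨x, rfl⟩; exact key x⟩
  have hsup_le : (⨆ x : ℝ, |Fn n x - F x|) ≤ ε / 2 := ciSup_le key
  have hsup_nonneg : 0 ≤ ⨆ x : ℝ, |Fn n x - F x| :=
    le_trans (abs_nonneg _) (le_ciSup hba 0)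
  rw [Real.dist_eq, sub_zero, abs_of_nonneg hsup_nonneg]
  linarith
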